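/- arXiv:1804.06524 — 7 statements merged into one kernel-verified Lean document; each statement's English description precedes it below -/
import Mathlib

section
/- Define P_1 = f′/2 and P_{n+1} = P_n′·f + (1/2 − n)·P_n·f′ where f(x,λ) = x(x−1)(x−λ) ∈ ℝ[x,λ] and derivatives are with respect to x. Then for every n ≥ 1, the degree of P_n in the variable λ is exactly n. -/
open MvPolynomial

/-- The Legendre cubic `f(x,λ) = x(x-1)(x-λ)`, with `x = X 0` and `λ = X 1`. -/
noncomputable def legf : MvPolynomial (Fin 2) ℝ := X 0 * (X 0 - 1) * (X 0 - X 1)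

/-- The key polynomials: `P 1 = (1/2)∂f/∂x`,
`P (n+1) = (∂P n/∂x)·f + (-n+1/2)·(P n)·(∂f/∂x)` for `n ≥ 1`. -/
noncomputable def P : ℕ → MvPolynomial (Fin 2) ℝ
  | 0 => 1
  | 1 => C (1 / 2 : ℝ) * pderiv 0 legf
  | n + 2 =>
      pderiv 0 (P (n + 1)) * legf
        + C (1 / 2 - (n + 1 : ℝ)) * (P (n + 1) * pderiv 0 legf)

/-- Substitution `x ↦ 0`, `λ ↦ X`. -/
noncomputable def phi : MvPolynomial (Fin 2) ℝ →ₐ[ℝ] Polynomial ℝ :=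
  aeval ![(0 : Polynomial ℝ), Polynomial.X]

lemma degreeOf_pderiv_le (p : MvPolynomial (Fin 2) ℝ) :
    (pderiv 0 p).degreeOf 1 ≤ p.degreeOf 1 := by
  conv_lhs => rw [p.as_sum]
  rw [map_sum]
  refine (degreeOf_sum_le _ _ _).trans (Finset.sup_le fun d hd => ?_)
  rw [pderiv_monomial]
  refine le_trans ?_ (monomial_le_degreeOf 1 hd)
  refine degreeOf_le_iff.mpr fun m hm => ?_
  have : m = d - Finsupp.single 0 1 := by
    have := support_monomial_subset hm
    simpa using Finset.mem_singleton.mp this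
  subst this
  simp [Finsupp.tsub_apply, Finsupp.single_apply]

lemma degreeOf_legf_le : legf.degreeOf 1 ≤ 1 := by
  refine le_trans (degreeOf_mul_le _ _ _) ?_
  have h1 : (X 0 * (X 0 - 1) : MvPolynomial (Fin 2) ℝ).degreeOf 1 ≤ 0 := by
    refine le_trans (degreeOf_mul_le _ _ _) ?_
    have : (X 0 - 1 : MvPolynomial (Fin 2) ℝ).degreeOf 1 ≤ 0 := by
      refine le_trans (degreeOf_sub_le _ _ _) ?_
      have h1 : degreeOf (1 : Fin 2) (1 : MvPolynomial (Fin 2) ℝ) = 0 := by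
        classical rw [degreeOf_def, degrees_one]; simp
      simp [degreeOf_X, h1]
    simpa [degreeOf_X] using this
  have h2 : (X 0 - X 1 : MvPolynomial (Fin 2) ℝ).degreeOf 1 ≤ 1 := by
    refine le_trans (degreeOf_sub_le _ _ _) ?_
    simp [degreeOf_X]
  omega

lemma phi_legf : phi legf = 0 := by
  simp [phi, legf]

lemma pderiv_legf : pderiv 0 legf =
    (X 0 - 1) * (X 0 - X 1) + X 0 * (X 0 - X 1) + X 0 * (X 0 - 1) := by
  simp [legf, pderiv_mul]
  ring

lemma phi_pderiv_legf : phi (pderiv 0 legf) = Polynomial.X := by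
  rw [pderiv_legf]
  simp [phi]

lemma natDegree_phi_le (p : MvPolynomial (Fin 2) ℝ) :
    (phi p).natDegree ≤ p.degreeOf 1 := by
  conv_lhs => rw [p.as_sum]
  rw [map_sum]
  refine Polynomial.natDegree_sum_le_of_forall_le _ _ fun d hd => ?_
  refine le_trans ?_ (monomial_le_degreeOf 1 hd)
  rw [phi, aeval_monomial]
  rw [Finsupp.prod_fintype _ _ (fun i => pow_zero _), Fin.prod_univ_two]
  rcases Nat.eq_zero_or_pos (d 0) with h | h
  · simp only [h, Matrix.cons_val_zero, Matrix.cons_val_one, Matrix.head_cons, pow_zero, one_mul]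
    exact le_trans (Polynomial.natDegree_mul_le) (by simp)
  · simp [zero_pow h.ne', Matrix.cons_val_zero]

lemma phi_P (n : ℕ) : ∃ c : ℝ, c ≠ 0 ∧
    phi (P (n + 1)) = Polynomial.C c * Polynomial.X ^ (n + 1) := by
  induction n with
  | zero =>
      refine ⟨1 / 2, by norm_num, ?_⟩
      show phi (C (1 / 2 : ℝ) * pderiv 0 legf) = _
      rw [map_mul, phi_pderiv_legf]
      simp [phi, algebraMap_eq]
  | succ n ih =>
      obtain ⟨c, hc, hP⟩ := ih
      refine ⟨(1 / 2 - (n + 1 : ℝ)) * c, ?_, ?_⟩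
      · have h0 : (0 : ℝ) ≤ (n : ℝ) := Nat.cast_nonneg n
        have : (1 / 2 - (n + 1 : ℝ)) ≠ 0 := by intro h; linarith
        exact mul_ne_zero this hc
      · show phi (pderiv 0 (P (n + 1)) * legf
            + C (1 / 2 - (n + 1 : ℝ)) * (P (n + 1) * pderiv 0 legf)) = _
        rw [map_add, map_mul, phi_legf, mul_zero, zero_add, map_mul, map_mul,
          hP, phi_pderiv_legf]
        rw [show phi (C (1 / 2 - (n + 1 : ℝ))) = Polynomial.C (1 / 2 - (n + 1 : ℝ)) by
          simp [phi, algebraMap_eq]]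
        rw [map_mul]
        ring

lemma degreeOf_P_le (n : ℕ) : (P (n + 1)).degreeOf 1 ≤ n + 1 := by
  induction n with
  | zero =>
      show (C (1 / 2 : ℝ) * pderiv 0 legf).degreeOf 1 ≤ 1
      refine le_trans (degreeOf_mul_le _ _ _) ?_
      simpa using le_trans (degreeOf_pderiv_le legf) degreeOf_legf_le
  | succ n ih =>
      show (pderiv 0 (P (n + 1)) * legf
          + C (1 / 2 - (n + 1 : ℝ)) * (P (n + 1) * pderiv 0 legf)).degreeOf 1 ≤ n + 2
      refine le_trans (degreeOf_add_le _ _ _) (max_le ?_ ?_)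
      · refine le_trans (degreeOf_mul_le _ _ _) ?_
        have := le_trans (degreeOf_pderiv_le (P (n+1))) ih
        have := degreeOf_legf_le
        omega
      · refine le_trans (degreeOf_mul_le _ _ _) ?_
        have : (P (n + 1) * pderiv 0 legf).degreeOf 1 ≤ n + 2 := by
          refine le_trans (degreeOf_mul_le _ _ _) ?_
          have := le_trans (degreeOf_pderiv_le legf) degreeOf_legf_le
          omega
        rw [degreeOf_C, zero_add]
        exact this

/-- For every `n ≥ 1`, the degree of `P n` in the variable `λ` is exactly `n`. -/
theorem degree_lambda_of_keyPolynomial :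
    ∀ n : ℕ, 1 ≤ n → (P n).degreeOf 1 = n := by
  rintro (_ | n) hn
  · omega
  refine le_antisymm (degreeOf_P_le n) ?_
  obtain ⟨c, hc, hP⟩ := phi_P n
  have := natDegree_phi_le (P (n + 1))
  rw [hP, Polynomial.natDegree_C_mul_X_pow _ _ hc] at this
  exact this
end

section
/- Let a_n ∈ ℝ[x] be the coefficient of λⁿ in the key polynomial P_n(x,λ). Then a_{n+1}(x) = −x(x−1)·a_n′(x) + (−n+1/2)(1−2x)·a_n(x), and a_{n+1} ≠ 0 whenever a_n ≠ 0. -/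
open MvPolynomial

/-!
Read `ℝ[x, λ]` as `ℝ[x][λ]`. Since `∂/∂x` does not raise the `λ`-degree and `f`, `∂f/∂x` have
`λ`-degree one, `P n` has `λ`-degree at most `n`, so the `λ^(n+1)`-coefficient of `P (n+1)` only
involves top coefficients: `a n' · (-x(x-1)) + (-n+1/2) · a n · (1-2x)`, where `-x(x-1)` and
`1-2x` are the `λ`-coefficients of `f` and `∂f/∂x`. At `x = 0` this gives
`a (n+1)(0) = (-n+1/2) · a n(0)` and `a 1(0) = 1/2`, so no `a n` with `n ≥ 1` vanishes.
-/

open Polynomial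

theorem Polynomial.Bivariate.equivMvPolynomial_monomial_monomial {R : Type*} [CommSemiring R]
    (m j : ℕ) (a : R) :
    equivMvPolynomial R (monomial m (monomial j a))
      = MvPolynomial.monomial (Finsupp.single 0 j + Finsupp.single 1 m) a := by
  rw [← Polynomial.C_mul_X_pow_eq_monomial, ← Polynomial.C_mul_X_pow_eq_monomial]
  simp [MvPolynomial.X_pow_eq_monomial, MvPolynomial.C_mul_monomial, MvPolynomial.monomial_mul]

section LambdaCoeff

variable {R : Type*} [CommSemiring R]

/-- The coefficient of `λ ^ n = X 1 ^ n` in `p`, as a polynomial in `x = X 0`. -/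
noncomputable def lambdaCoeff (n : ℕ) (p : MvPolynomial (Fin 2) R) : R[X] :=
  ((Bivariate.equivMvPolynomial R).symm p).coeff n

noncomputable def lambdaDegree (p : MvPolynomial (Fin 2) R) : ℕ :=
  ((Bivariate.equivMvPolynomial R).symm p).natDegree

theorem coeff_lambdaCoeff (n k : ℕ) (p : MvPolynomial (Fin 2) R) :
    (lambdaCoeff n p).coeff k = p.coeff (Finsupp.single 0 k + Finsupp.single 1 n) := by
  obtain ⟨q, rfl⟩ := (Bivariate.equivMvPolynomial R).surjective p
  rw [lambdaCoeff, AlgEquiv.symm_apply_apply]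
  induction q using Polynomial.induction_on' with
  | add p q hp hq => simp [hp, hq]
  | monomial m r =>
    induction r using Polynomial.induction_on' with
    | add p q hp hq => simp_all [map_add]
    | monomial j a =>
      rw [Bivariate.equivMvPolynomial_monomial_monomial, MvPolynomial.coeff_monomial]
      by_cases hm : m = n <;> by_cases hj : j = k <;>
        simp [Finsupp.ext_iff, hm, hj, Polynomial.coeff_monomial]

theorem lambdaCoeff_add (n : ℕ) (p q : MvPolynomial (Fin 2) R) :
    lambdaCoeff n (p + q) = lambdaCoeff n p + lambdaCoeff n q := by
  simp [lambdaCoeff]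

theorem lambdaCoeff_C_mul (n : ℕ) (c : R) (p : MvPolynomial (Fin 2) R) :
    lambdaCoeff n (MvPolynomial.C c * p) = Polynomial.C c * lambdaCoeff n p := by
  simp [lambdaCoeff]

theorem lambdaCoeff_mul_of_lambdaDegree_le {m n : ℕ} {p q : MvPolynomial (Fin 2) R}
    (hp : lambdaDegree p ≤ m) (hq : lambdaDegree q ≤ n) :
    lambdaCoeff (m + n) (p * q) = lambdaCoeff m p * lambdaCoeff n q := by
  rw [lambdaCoeff, map_mul, coeff_mul_add_eq_of_natDegree_le hp hq]
  rfl

end LambdaCoeff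

section Pderiv

variable {R : Type*} [CommRing R]

theorem lambdaCoeff_pderiv_zero (n : ℕ) (p : MvPolynomial (Fin 2) R) :
    lambdaCoeff n (pderiv 0 p) = derivative (lambdaCoeff n p) := by
  obtain ⟨q, rfl⟩ := (Bivariate.equivMvPolynomial R).surjective p
  rw [lambdaCoeff, lambdaCoeff, Bivariate.pderiv_zero_equivMvPolynomial,
    AlgEquiv.symm_apply_apply, AlgEquiv.symm_apply_apply]
  rfl

theorem lambdaDegree_pderiv_zero_le (p : MvPolynomial (Fin 2) R) :
    lambdaDegree (pderiv 0 p) ≤ lambdaDegree p := by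
  refine natDegree_le_iff_coeff_eq_zero.mpr fun m hm => ?_
  change lambdaCoeff m (pderiv 0 p) = 0
  rw [lambdaCoeff_pderiv_zero, lambdaCoeff, coeff_eq_zero_of_natDegree_lt (by exact_mod_cast hm),
    derivative_zero]

end Pderiv
theorem equivMvPolynomial_symm_legf :
    (Bivariate.equivMvPolynomial ℝ).symm legf
      = Polynomial.C (-(Polynomial.X * (Polynomial.X - 1))) * Polynomial.X
        + Polynomial.C (Polynomial.X * (Polynomial.X - 1) * Polynomial.X) := by
  simp only [legf, map_mul, map_sub, map_one, map_neg, Bivariate.equivMvPolynomial_symm_X_0,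
    Bivariate.equivMvPolynomial_symm_X_1]
  ring

theorem lambdaDegree_legf : lambdaDegree legf ≤ 1 := by
  rw [lambdaDegree, equivMvPolynomial_symm_legf]
  exact natDegree_linear_le

theorem lambdaCoeff_one_legf : lambdaCoeff 1 legf = -(Polynomial.X * (Polynomial.X - 1)) := by
  simp [lambdaCoeff, equivMvPolynomial_symm_legf, Polynomial.coeff_one]

theorem lambdaCoeff_one_pderiv_legf : lambdaCoeff 1 (pderiv 0 legf) = 1 - 2 * Polynomial.X := by
  rw [lambdaCoeff_pderiv_zero, lambdaCoeff_one_legf]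
  simp only [derivative_neg, derivative_mul, derivative_X, derivative_sub, derivative_one]
  ring

theorem lambdaDegree_pderiv_legf : lambdaDegree (pderiv 0 legf) ≤ 1 :=
  (lambdaDegree_pderiv_zero_le legf).trans lambdaDegree_legf

theorem lambdaDegree_P : ∀ n, lambdaDegree (P n) ≤ n
  | 0 => by simp [lambdaDegree, P]
  | 1 => by
    rw [P, lambdaDegree, map_mul, Bivariate.equivMvPolynomial_symm_C]
    exact (natDegree_C_mul_le _ _).trans lambdaDegree_pderiv_legf
  | n + 2 => by
    have hP := lambdaDegree_P (n + 1)
    rw [P, lambdaDegree, map_add, map_mul, map_mul, map_mul, Bivariate.equivMvPolynomial_symm_C]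
    exact natDegree_add_le_of_degree_le
      (natDegree_mul_le_of_le (m := n + 1) ((lambdaDegree_pderiv_zero_le _).trans hP)
        lambdaDegree_legf)
      ((natDegree_C_mul_le _ _).trans
        (natDegree_mul_le_of_le (m := n + 1) hP lambdaDegree_pderiv_legf))

theorem lambdaCoeff_P_succ (n : ℕ) (hn : 1 ≤ n) :
    lambdaCoeff (n + 1) (P (n + 1))
      = -(Polynomial.X * (Polynomial.X - 1)) * derivative (lambdaCoeff n (P n))
        + Polynomial.C (-(n : ℝ) + 1 / 2) * ((1 - 2 * Polynomial.X) * lambdaCoeff n (P n)) := by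
  obtain ⟨m, rfl⟩ := Nat.exists_eq_add_of_le' hn
  have hP := lambdaDegree_P (m + 1)
  rw [P, lambdaCoeff_add, lambdaCoeff_C_mul,
    lambdaCoeff_mul_of_lambdaDegree_le ((lambdaDegree_pderiv_zero_le _).trans hP) lambdaDegree_legf,
    lambdaCoeff_mul_of_lambdaDegree_le hP lambdaDegree_pderiv_legf,
    lambdaCoeff_pderiv_zero, lambdaCoeff_one_legf, lambdaCoeff_one_pderiv_legf]
  rw [show (1 / 2 - ((m : ℝ) + 1)) = -((m + 1 : ℕ) : ℝ) + 1 / 2 by push_cast; ring]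
  ring

theorem coeff_zero_lambdaCoeff_P_ne_zero (n : ℕ) (hn : 1 ≤ n) :
    (lambdaCoeff n (P n)).coeff 0 ≠ 0 := by
  induction n, hn using Nat.le_induction with
  | base =>
    rw [P, lambdaCoeff_C_mul, lambdaCoeff_one_pderiv_legf]
    norm_num
  | succ n hn ih =>
    rw [lambdaCoeff_P_succ n hn]
    have hc : -(n : ℝ) + 1 / 2 ≠ 0 := by
      have : (1 : ℝ) ≤ n := by exact_mod_cast hn
      linarith
    simpa [Polynomial.mul_coeff_zero] using And.intro hc ih

open Polynomial in
/-- If `a n ∈ ℝ[x]` is the coefficient of `λ^n` in the key polynomial `P n`, then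
`a (n+1) = -x(x-1)·(a n)' + (-n+1/2)(1-2x)·(a n)`, and `a (n+1) ≠ 0` whenever `a n ≠ 0`. -/
theorem lambda_leadingCoeff_recursion (a : ℕ → Polynomial ℝ)
    (ha : ∀ n k : ℕ, (a n).coeff k
      = MvPolynomial.coeff (Finsupp.single 0 k + Finsupp.single 1 n) (P n)) :
    ∀ n : ℕ, 1 ≤ n →
      a (n + 1) = -(Polynomial.X * (Polynomial.X - 1)) * derivative (a n)
          + Polynomial.C (-(n : ℝ) + 1 / 2) * ((1 - 2 * Polynomial.X) * a n)
        ∧ (a n ≠ 0 → a (n + 1) ≠ 0) := by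
  have hlc : ∀ n, a n = lambdaCoeff n (P n) := fun n =>
    Polynomial.ext fun k => by rw [ha, coeff_lambdaCoeff]
  intro n hn
  rw [hlc, hlc]
  refine ⟨lambdaCoeff_P_succ n hn, fun _ h => ?_⟩
  exact coeff_zero_lambdaCoeff_P_ne_zero (n + 1) (by omega) (by rw [h, Polynomial.coeff_zero])
end

section
/- There is no nonzero polynomial y ∈ ℝ[x] solving the ODE y′/y = (−n+1/2)(1−2x)/(x(x−1)) for any integer n ≥ 1; equivalently, no nonzero polynomial y satisfies x(x−1)·y′ = (−n+1/2)(1−2x)·y. -/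
open Polynomial

/-- No nonzero polynomial `y ∈ ℝ[x]` satisfies `x(x-1)·y' = (-n+1/2)(1-2x)·y`
for an integer `n ≥ 1`. -/
theorem no_polynomial_solution_of_ODE (n : ℕ) (hn : 1 ≤ n) (y : Polynomial ℝ)
    (h : X * (X - 1) * derivative y = C (-(n : ℝ) + 1 / 2) * ((1 - 2 * X) * y)) :
    y = 0 := by
  by_contra hy0
  obtain ⟨z, hz, hdvd⟩ := y.exists_eq_pow_rootMultiplicity_mul_and_not_dvd hy0 0
  simp only [C_0, sub_zero] at hz hdvd
  set k := rootMultiplicity 0 y with hk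
  have hz0 : z.eval 0 ≠ 0 := by
    intro h0
    exact hdvd (X_dvd_iff.mpr (by rwa [coeff_zero_eq_eval_zero]))
  rcases k with _ | m
  · -- k = 0 : y = z, eval at 0
    rw [pow_zero, one_mul] at hz
    subst hz
    have := congrArg (eval 0) h
    simp at this
    rcases this with h1 | h1
    · have : (n:ℝ) ≥ 1 := by exact_mod_cast hn
      linarith
    · exact hz0 h1
  · -- k = m+1
    have hd : derivative (X^(m+1) * z) = C ((m:ℝ)+1) * X^m * z + X^(m+1) * derivative z := by
      rw [derivative_mul, derivative_X_pow]
      push_cast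
      ring_nf
    rw [hz, hd] at h
    have h' : X^(m+1) * ((C ((m:ℝ)+1)) * (X-1) * z + X*(X-1)*derivative z) =
        X^(m+1) * (C (-(n:ℝ)+1/2) * ((1-2*X)*z)) := by
      linear_combination h
    have h'' := mul_left_cancel₀ (pow_ne_zero (m+1) (X_ne_zero : (X : Polynomial ℝ) ≠ 0)) h'
    have he := congrArg (eval 0) h''
    simp at he
    have hkey : -((m:ℝ)+1) = -(n:ℝ) + 1/2 := by
      rcases he with h1 | h1
      · linarith
      · exact absurd h1 hz0
    have h2 : (2*n : ℝ) = 2*m + 3 := by linarith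
    have : 2*n = 2*m + 3 := by exact_mod_cast h2
    omega
end

section
/- Let P_n(x,λ) be the key polynomials for the Legendre family f(x,λ) = x(x−1)(x−λ). Then for all n ≥ 1, P_n satisfies the symmetry P_n(x+1, λ+1) = P_n(−x, −λ). -/
open MvPolynomial

lemma pderiv_aeval_aux (g : Fin 2 → MvPolynomial (Fin 2) ℝ) (c : ℝ)
    (h0 : pderiv 0 (g 0) = C c) (h1 : pderiv 0 (g 1) = 0)
    (q : MvPolynomial (Fin 2) ℝ) :
    pderiv 0 (aeval g q) = C c * aeval g (pderiv 0 q) := by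
  induction q using MvPolynomial.induction_on with
  | C a => simp
  | add p q hp hq => simp only [map_add, hp, hq]; ring
  | mul_X p n hp =>
    rw [map_mul, aeval_X, pderiv_mul, hp]
    rw [pderiv_mul, map_add, map_mul, map_mul, aeval_X]
    fin_cases n
    · simp only [Fin.zero_eta]
      rw [h0, pderiv_X_self, map_one]
      ring
    · simp only [Fin.mk_one]
      rw [h1, pderiv_X_of_ne (by decide), map_zero]
      ring

lemma sigma_aux (q : MvPolynomial (Fin 2) ℝ) :
    pderiv 0 (aeval (![X 0 + 1, X 1 + 1] : Fin 2 → MvPolynomial (Fin 2) ℝ) q)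
      = aeval (![X 0 + 1, X 1 + 1] : Fin 2 → MvPolynomial (Fin 2) ℝ) (pderiv 0 q) := by
  have := pderiv_aeval_aux (![X 0 + 1, X 1 + 1]) 1 (by simp) (by simp) q
  simpa using this

lemma tau_aux (q : MvPolynomial (Fin 2) ℝ) :
    pderiv 0 (aeval (![-X 0, -X 1] : Fin 2 → MvPolynomial (Fin 2) ℝ) q)
      = - aeval (![-X 0, -X 1] : Fin 2 → MvPolynomial (Fin 2) ℝ) (pderiv 0 q) := by
  have := pderiv_aeval_aux (![-X 0, -X 1]) (-1) (by simp) (by simp) q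
  simpa using this

lemma legf_sym :
    aeval (![X 0 + 1, X 1 + 1] : Fin 2 → MvPolynomial (Fin 2) ℝ) legf
      = - aeval (![-X 0, -X 1] : Fin 2 → MvPolynomial (Fin 2) ℝ) legf := by
  simp [legf]
  ring

lemma legf_deriv_sym :
    aeval (![X 0 + 1, X 1 + 1] : Fin 2 → MvPolynomial (Fin 2) ℝ) (pderiv 0 legf)
      = aeval (![-X 0, -X 1] : Fin 2 → MvPolynomial (Fin 2) ℝ) (pderiv 0 legf) := by
  rw [← sigma_aux, legf_sym, map_neg, tau_aux]
  ring

/-- The symmetry `P n (x+1, λ+1) = P n (-x, -λ)` for all `n ≥ 1`. -/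
theorem keyPolynomial_symmetry :
    ∀ n : ℕ, 1 ≤ n →
      aeval (![X 0 + 1, X 1 + 1] : Fin 2 → MvPolynomial (Fin 2) ℝ) (P n)
        = aeval (![-X 0, -X 1] : Fin 2 → MvPolynomial (Fin 2) ℝ) (P n) := by
  have key : ∀ n : ℕ,
      aeval (![X 0 + 1, X 1 + 1] : Fin 2 → MvPolynomial (Fin 2) ℝ) (P (n + 1))
        = aeval (![-X 0, -X 1] : Fin 2 → MvPolynomial (Fin 2) ℝ) (P (n + 1)) := by
    intro n
    induction n with
    | zero =>
      show aeval _ (P 1) = aeval _ (P 1)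
      rw [P]
      simp only [map_mul, aeval_C, MvPolynomial.algebraMap_eq]
      rw [legf_deriv_sym]
    | succ m ih =>
      show aeval _ (P (m + 2)) = aeval _ (P (m + 2))
      rw [P]
      simp only [map_add, map_mul, aeval_C, MvPolynomial.algebraMap_eq]
      have h1 : aeval (![X 0 + 1, X 1 + 1] : Fin 2 → MvPolynomial (Fin 2) ℝ)
          (pderiv 0 (P (m + 1)))
          = - aeval (![-X 0, -X 1] : Fin 2 → MvPolynomial (Fin 2) ℝ)
            (pderiv 0 (P (m + 1))) := by
        rw [← sigma_aux, ih, tau_aux]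
      rw [h1, legf_sym, legf_deriv_sym, ih]
      ring
  intro n hn
  obtain ⟨m, rfl⟩ := Nat.exists_eq_add_of_le hn
  simpa [Nat.add_comm] using key m
end

section
/- Let P_n(x,λ,z) denote the homogenization in degree 2n of the key polynomial P_n(x,λ) (with respect to a third variable z, using deg_x P_n = 2n). Then the dehomogenization with respect to λ, namely P_n(x,1,z), equals P_n(x,z); i.e., P_n is invariant under exchanging λ and z after homogenization. -/
open MvPolynomial

/-- The homogenization of a polynomial in `x = X 0`, `λ = X 1` to degree `N`
with respect to a third variable `z = X 2`. -/
noncomputable def homog (N : ℕ) (p : MvPolynomial (Fin 2) ℝ) : MvPolynomial (Fin 3) ℝ :=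
  ∑ d ∈ p.support,
    monomial (Finsupp.single 0 (d 0) + Finsupp.single 1 (d 1)
      + Finsupp.single 2 (N - (d 0 + d 1))) (coeff d p)

/-! Homogenizing the cubic gives `x(x - z)(x - λ)`, which is symmetric in `λ` and `z`. Running the
key-polynomial recursion on it produces homogeneous polynomials `Q n = keyPoly 0 legfHomog n` of
degree `2n`, symmetric in `λ, z`, which specialize to `P n` at `z = 1` because that substitution
commutes with `∂/∂x`. A homogeneous polynomial is recovered by homogenizing its specialization at
`z = 1`, so `homog (2n) (P n) = Q n`, and both claims follow from the symmetry of `Q n`. -/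

section KeyPolynomials

variable {σ τ R : Type*} [Field R]

noncomputable def keyPoly (i : σ) (f : MvPolynomial σ R) : ℕ → MvPolynomial σ R
  | 0 => 1
  | 1 => C (1 / 2 : R) * pderiv i f
  | n + 2 =>
      pderiv i (keyPoly i f (n + 1)) * f
        + C (1 / 2 - (n + 1 : R)) * (keyPoly i f (n + 1) * pderiv i f)

theorem map_keyPoly (φ : MvPolynomial σ R →ₐ[R] MvPolynomial τ R) {i : σ} {j : τ}
    (hφ : ∀ p, φ (pderiv i p) = pderiv j (φ p)) (f : MvPolynomial σ R) :
    ∀ n, φ (keyPoly i f n) = keyPoly j (φ f) n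
  | 0 => by simp [keyPoly]
  | 1 => by simp only [keyPoly, map_mul, algHom_C, algebraMap_eq, hφ]
  | n + 2 => by
      simp only [keyPoly, map_add, map_mul, algHom_C, algebraMap_eq, hφ,
        map_keyPoly φ hφ f (n + 1)]

theorem isHomogeneous_keyPoly {i : σ} {f : MvPolynomial σ R} {k : ℕ}
    (hf : f.IsHomogeneous (k + 2)) : ∀ n, (keyPoly i f (n + 1)).IsHomogeneous ((n + 1) * (k + 1))
  | 0 => by simpa [keyPoly] using hf.pderiv.C_mul (1 / 2 : R)
  | n + 1 => by
      have ih := isHomogeneous_keyPoly (i := i) hf n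
      rw [keyPoly]
      refine .add ?_ (.C_mul ?_ _)
      · convert ih.pderiv.mul hf using 1
        have : 1 ≤ (n + 1) * (k + 1) := Nat.one_le_iff_ne_zero.mpr (by positivity)
        zify [this]
        ring
      · convert ih.mul hf.pderiv using 1
        rw [show k + 2 - 1 = k + 1 from rfl]
        ring

end KeyPolynomials

theorem keyPoly_legf : ∀ n, keyPoly 0 legf n = P n
  | 0 => rfl
  | 1 => rfl
  | n + 2 => by rw [keyPoly, P, keyPoly_legf (n + 1)]

noncomputable def legfHomog : MvPolynomial (Fin 3) ℝ := X 0 * (X 0 - X 2) * (X 0 - X 1)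

theorem isHomogeneous_legfHomog : legfHomog.IsHomogeneous 3 :=
  ((isHomogeneous_X ℝ 0).mul ((isHomogeneous_X ℝ 0).sub (isHomogeneous_X ℝ 2))).mul
    ((isHomogeneous_X ℝ 0).sub (isHomogeneous_X ℝ 1))

theorem rename_swap_legfHomog : rename (Equiv.swap (1 : Fin 3) 2) legfHomog = legfHomog := by
  simp only [legfHomog, map_mul, map_sub, rename_X]
  rw [Equiv.swap_apply_of_ne_of_ne (by decide) (by decide), Equiv.swap_apply_left,
    Equiv.swap_apply_right]
  ring

noncomputable def dehomogenize : MvPolynomial (Fin 3) ℝ →ₐ[ℝ] MvPolynomial (Fin 2) ℝ :=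
  aeval ![X 0, X 1, 1]

theorem dehomogenize_legfHomog : dehomogenize legfHomog = legf := by
  simp [dehomogenize, legfHomog, legf]

theorem dehomogenize_pderiv_zero (p : MvPolynomial (Fin 3) ℝ) :
    dehomogenize (pderiv 0 p) = pderiv 0 (dehomogenize p) := by
  induction p using MvPolynomial.induction_on with
  | C a => simp [dehomogenize]
  | add p q hp hq => simp [hp, hq]
  | mul_X p j hp =>
      have hX : dehomogenize (pderiv 0 (X j)) = pderiv 0 (dehomogenize (X j)) := by
        fin_cases j <;> simp [dehomogenize]
      rw [pderiv_mul, map_add, map_mul, map_mul, hp, hX, map_mul, pderiv_mul]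

theorem dehomogenize_monomial (e : Fin 3 →₀ ℕ) (c : ℝ) :
    dehomogenize (monomial e c)
      = monomial (Finsupp.single 0 (e 0) + Finsupp.single 1 (e 1)) c := by
  rw [dehomogenize, aeval_monomial, Finsupp.prod_fintype _ _ (fun i => pow_zero _),
    Fin.prod_univ_three]
  simp [X_pow_eq_monomial, monomial_mul, C_mul_monomial]

theorem homog_add (N : ℕ) (p q : MvPolynomial (Fin 2) ℝ) :
    homog N (p + q) = homog N p + homog N q :=
  Finsupp.sum_add_index' (fun _ => map_zero _) (fun _ => map_add _)

theorem homog_monomial (N : ℕ) (d : Fin 2 →₀ ℕ) (c : ℝ) :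
    homog N (monomial d c) = monomial (Finsupp.single 0 (d 0) + Finsupp.single 1 (d 1)
      + Finsupp.single 2 (N - (d 0 + d 1))) c :=
  Finsupp.sum_single_index (map_zero _)

theorem homog_dehomogenize {N : ℕ} {q : MvPolynomial (Fin 3) ℝ} (hq : q.IsHomogeneous N) :
    homog N (dehomogenize q) = q := by
  have hexp : ∀ e ∈ q.support, Finsupp.single 0 (e 0) + Finsupp.single 1 (e 1)
      + Finsupp.single 2 (N - (e 0 + e 1)) = e := by
    intro e he
    have hdeg : e 0 + e 1 + e 2 = N := by
      simpa [Finsupp.weight_apply, Finsupp.sum_fintype, Fin.sum_univ_three]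
        using hq (mem_support_iff.mp he)
    ext i
    fin_cases i <;> simp
    omega
  conv_lhs => rw [← q.support_sum_monomial_coeff]
  have homog_sum := map_sum (AddMonoidHom.mk' (homog N) (homog_add N))
    (fun e => dehomogenize (monomial e (coeff e q))) q.support
  simp only [AddMonoidHom.mk'_apply] at homog_sum
  rw [map_sum, homog_sum]
  refine (Finset.sum_congr rfl fun e he => ?_).trans q.support_sum_monomial_coeff
  rw [dehomogenize_monomial, homog_monomial]
  simp only [Finsupp.add_apply, Finsupp.single_apply, Fin.reduceEq, if_true, if_false, add_zero,
    zero_add, hexp e he]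

theorem dehomogenize_keyPoly_legfHomog (n : ℕ) : dehomogenize (keyPoly 0 legfHomog n) = P n := by
  rw [map_keyPoly _ dehomogenize_pderiv_zero, dehomogenize_legfHomog, keyPoly_legf]

theorem rename_swap_keyPoly_legfHomog (n : ℕ) :
    rename (Equiv.swap (1 : Fin 3) 2) (keyPoly 0 legfHomog n) = keyPoly 0 legfHomog n := by
  have hswap : Equiv.swap (1 : Fin 3) 2 0 = 0 := by decide
  have hpderiv (p : MvPolynomial (Fin 3) ℝ) :
      rename (Equiv.swap (1 : Fin 3) 2) (pderiv 0 p)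
        = pderiv 0 (rename (Equiv.swap (1 : Fin 3) 2) p) := by
    rw [← pderiv_rename (Equiv.injective _), hswap]
  rw [map_keyPoly _ hpderiv, rename_swap_legfHomog]

theorem homog_P_eq_keyPoly_legfHomog (n : ℕ) (hn : 1 ≤ n) :
    homog (2 * n) (P n) = keyPoly 0 legfHomog n := by
  obtain ⟨m, rfl⟩ := Nat.exists_eq_add_of_le' hn
  rw [← dehomogenize_keyPoly_legfHomog]
  exact homog_dehomogenize <| by
    simpa [mul_comm] using isHomogeneous_keyPoly isHomogeneous_legfHomog m

/-- Homogenizing `P n` to degree `2n` (using `deg_x P n = 2n`) and then dehomogenizing with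
respect to `λ` (setting `λ = 1`) recovers `P n` with `z` in place of `λ`; equivalently, the
homogenization is invariant under exchanging `λ` and `z`. -/
theorem keyPolynomial_lambda_z_symmetry :
    ∀ n : ℕ, 1 ≤ n →
      aeval (![X 0, 1, X 1] : Fin 3 → MvPolynomial (Fin 2) ℝ) (homog (2 * n) (P n)) = P n
        ∧ rename (Equiv.swap (1 : Fin 3) 2) (homog (2 * n) (P n)) = homog (2 * n) (P n) := by
  intro n hn
  have hvars : (![X 0, 1, X 1] : Fin 3 → MvPolynomial (Fin 2) ℝ) ∘ Equiv.swap (1 : Fin 3) 2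
      = ![X 0, X 1, 1] := by
    funext i
    fin_cases i <;> rfl
  rw [homog_P_eq_keyPoly_legfHomog n hn]
  refine ⟨?_, rename_swap_keyPoly_legfHomog n⟩
  rw [← rename_swap_keyPoly_legfHomog, aeval_rename, hvars]
  exact dehomogenize_keyPoly_legfHomog n
end

section
/- Let P_3(x,λ) = ((−3/4)x+3/8)λ³ + ((15/8)x² − (3/4)x)λ² + ((3/4)x⁵ − (15/8)x⁴)λ + (−(3/8)x⁶ + (3/4)x⁵). Then with α = 1/(1−2x) and x ≠ 1/2, the depressed cubic obtained from P_3/((−3/4)x+3/8) by the substitution λ ↦ λ* − ((−5/6+α/6)x) has discriminant Δ = (q/2)² + (p/3)³ = (1/432)·x⁸·α⁴·(−256(x−1)⁸); in particular Δ < 0 for all real x ∉ {0, 1, 1/2}. -/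
/-!
Completing the cube turns the monic cubic `λ³ + a₂λ² + a₁λ + a₀` into `λ*³ + pλ* + q` with
`(q/2)² + (p/3)³ = -disc/108`, so `Δ` is `-1/108` times the discriminant of `P₃` divided by the
fourth power of its leading coefficient `(3/8)(1 - 2x)`. That discriminant is the perfect square
`(81/64)·x⁸(x - 1)⁸`, whence the closed form and its sign.
-/

namespace Cubic

variable {K : Type*} [Field K]

def depressedP (P : Cubic K) : K :=
  P.c / P.a - (P.b / P.a) ^ 2 / 3

def depressedQ (P : Cubic K) : K :=
  P.d / P.a - P.c / P.a * (P.b / P.a) / 3 + 2 * (P.b / P.a) ^ 3 / 27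

theorem depressedQ_sq_add_depressedP_cube [CharZero K] (P : Cubic K) :
    (P.depressedQ / 2) ^ 2 + (P.depressedP / 3) ^ 3 = -P.discr / (108 * P.a ^ 4) := by
  unfold depressedP depressedQ discr
  rcases eq_or_ne P.a 0 with ha | ha
  · simp [ha]
  · field_simp
    ring

end Cubic

-- `P₃(x, λ)` as a cubic in `λ` with coefficients depending on `x`.
noncomputable def keyPolynomialThree (x : ℝ) : Cubic ℝ :=
  ⟨-(3 / 4) * x + 3 / 8, 15 / 8 * x ^ 2 - 3 / 4 * x, 3 / 4 * x ^ 5 - 15 / 8 * x ^ 4,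
    -(3 / 8) * x ^ 6 + 3 / 4 * x ^ 5⟩

theorem keyPolynomialThree_discr (x : ℝ) :
    (keyPolynomialThree x).discr = 81 / 64 * x ^ 8 * (x - 1) ^ 8 := by
  simp only [Cubic.discr, keyPolynomialThree]
  ring

theorem keyPolynomialThree_discr_div (x : ℝ) :
    -(keyPolynomialThree x).discr / (108 * (keyPolynomialThree x).a ^ 4)
      = 1 / 432 * x ^ 8 * (1 / (1 - 2 * x)) ^ 4 * (-256 * (x - 1) ^ 8) := by
  have hlead : (keyPolynomialThree x).a = 3 / 8 * (1 - 2 * x) := by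
    simp only [keyPolynomialThree]
    ring
  rw [keyPolynomialThree_discr, hlead]
  generalize 1 - 2 * x = y
  ring

/-- For `x ≠ 1/2`, letting `α = 1/(1-2x)` and `a₂, a₁, a₀` be the coefficients of the monic
cubic in `λ` obtained by dividing `P₃(x,λ)` by its leading coefficient `(-3/4)x + 3/8`, the
depressed cubic obtained by the substitution `λ ↦ λ* - a₂/3` has coefficients
`p = a₁ - a₂²/3`, `q = a₀ - a₁a₂/3 + 2a₂³/27`, and discriminant
`Δ = (q/2)² + (p/3)³ = (1/432)·x⁸·α⁴·(-256(x-1)⁸)`; in particular `Δ < 0` for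
`x ∉ {0, 1, 1/2}`. -/
theorem keyPolynomial_three_depressed_discriminant (x : ℝ) (hx : x ≠ 1 / 2)
    (α a2 a1 a0 p q Δ : ℝ)
    (hα : α = 1 / (1 - 2 * x))
    (ha2 : a2 = (15 / 8 * x ^ 2 - 3 / 4 * x) / (-(3 / 4) * x + 3 / 8))
    (ha1 : a1 = (3 / 4 * x ^ 5 - 15 / 8 * x ^ 4) / (-(3 / 4) * x + 3 / 8))
    (ha0 : a0 = (-(3 / 8) * x ^ 6 + 3 / 4 * x ^ 5) / (-(3 / 4) * x + 3 / 8))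
    (hp : p = a1 - a2 ^ 2 / 3)
    (hq : q = a0 - a1 * a2 / 3 + 2 * a2 ^ 3 / 27)
    (hΔ : Δ = (q / 2) ^ 2 + (p / 3) ^ 3) :
    Δ = 1 / 432 * x ^ 8 * α ^ 4 * (-256 * (x - 1) ^ 8)
      ∧ (x ≠ 0 → x ≠ 1 → Δ < 0) := by
  have hpP : p = (keyPolynomialThree x).depressedP := by
    rw [hp, ha1, ha2]
    rfl
  have hqP : q = (keyPolynomialThree x).depressedQ := by
    rw [hq, ha0, ha1, ha2]
    rfl
  have hformula : Δ = 1 / 432 * x ^ 8 * α ^ 4 * (-256 * (x - 1) ^ 8) := by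
    rw [hΔ, hpP, hqP, Cubic.depressedQ_sq_add_depressedP_cube, keyPolynomialThree_discr_div, hα]
  refine ⟨hformula, fun hx0 hx1 => ?_⟩
  have hα0 : α ≠ 0 := by
    rw [hα]
    refine one_div_ne_zero fun h => hx ?_
    linarith
  have hx1' : x - 1 ≠ 0 := sub_ne_zero.mpr hx1
  have hpos : 0 < x ^ 8 * α ^ 4 * (x - 1) ^ 8 := by positivity
  rw [hformula]
  linarith
end

section
/- Newton polygon lower bound for P_5 at the origin: writing P_5(x,λ) = Σ c_{ij} x^i λ^j, every monomial with c_{ij} ≠ 0 satisfies i + j ≥ 5 and i + 3j ≥ 9 or lies on the lower hull segments; concretely, the lowest-order part of P_5 along λ = x·(c+o(1)) is (15/32)x⁵c²(c−2)(7c²−16c+16), so the unique nonzero real value c with vanishing leading term, among branches of slope 1, is c = 2. -/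
open MvPolynomial

set_option maxHeartbeats 1000000 in
lemma P1_eq : P 1 = C (1/2 : ℝ) * X 0 ^ 0 * X 1 ^ 1 + C (-1 : ℝ) * X 0 ^ 1 * X 1 ^ 0 + C (-1 : ℝ) * X 0 ^ 1 * X 1 ^ 1 + C (3/2 : ℝ) * X 0 ^ 2 * X 1 ^ 0 := by
  show C (1 / 2 : ℝ) * pderiv 0 legf = _
  simp only [legf, map_neg, map_add, map_sub, map_mul, map_one, pderiv_mul,
    pderiv_pow, pderiv_C, pderiv_X_self, pderiv_one,
    pderiv_X_of_ne (show (1:Fin 2) ≠ 0 by decide)]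
  apply MvPolynomial.funext; intro x
  simp [legf]
  ring

set_option maxHeartbeats 1000000 in
lemma P2_eq : P 2 = C (-1/4 : ℝ) * X 0 ^ 0 * X 1 ^ 2 + C (3/2 : ℝ) * X 0 ^ 2 * X 1 ^ 1 + C (-1 : ℝ) * X 0 ^ 3 * X 1 ^ 0 + C (-1 : ℝ) * X 0 ^ 3 * X 1 ^ 1 + C (3/4 : ℝ) * X 0 ^ 4 * X 1 ^ 0 := by
  show P (0+2) = _
  rw [P, P1_eq]
  simp only [legf, map_neg, map_add, map_sub, map_mul, map_one, pderiv_mul,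
    pderiv_pow, pderiv_C, pderiv_X_self, pderiv_one,
    pderiv_X_of_ne (show (1:Fin 2) ≠ 0 by decide)]
  apply MvPolynomial.funext; intro x
  simp [legf]
  ring

set_option maxHeartbeats 1000000 in
lemma P3_eq : P 3 = C (3/8 : ℝ) * X 0 ^ 0 * X 1 ^ 3 + C (-3/4 : ℝ) * X 0 ^ 1 * X 1 ^ 2 + C (-3/4 : ℝ) * X 0 ^ 1 * X 1 ^ 3 + C (15/8 : ℝ) * X 0 ^ 2 * X 1 ^ 2 + C (-15/8 : ℝ) * X 0 ^ 4 * X 1 ^ 1 + C (3/4 : ℝ) * X 0 ^ 5 * X 1 ^ 0 + C (3/4 : ℝ) * X 0 ^ 5 * X 1 ^ 1 + C (-3/8 : ℝ) * X 0 ^ 6 * X 1 ^ 0 := by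
  show P (1+2) = _
  rw [P, P2_eq]
  simp only [legf, map_neg, map_add, map_sub, map_mul, map_one, pderiv_mul,
    pderiv_pow, pderiv_C, pderiv_X_self, pderiv_one,
    pderiv_X_of_ne (show (1:Fin 2) ≠ 0 by decide)]
  apply MvPolynomial.funext; intro x
  simp [legf]
  ring

set_option maxHeartbeats 1000000 in
lemma P4_eq : P 4 = C (-15/16 : ℝ) * X 0 ^ 0 * X 1 ^ 4 + C (3 : ℝ) * X 0 ^ 1 * X 1 ^ 3 + C (3 : ℝ) * X 0 ^ 1 * X 1 ^ 4 + C (-3 : ℝ) * X 0 ^ 2 * X 1 ^ 2 + C (-39/4 : ℝ) * X 0 ^ 2 * X 1 ^ 3 + C (-3 : ℝ) * X 0 ^ 2 * X 1 ^ 4 + C (21/2 : ℝ) * X 0 ^ 3 * X 1 ^ 2 + C (21/2 : ℝ) * X 0 ^ 3 * X 1 ^ 3 + C (-105/8 : ℝ) * X 0 ^ 4 * X 1 ^ 2 + C (21/4 : ℝ) * X 0 ^ 6 * X 1 ^ 1 + C (-3/2 : ℝ) * X 0 ^ 7 * X 1 ^ 0 + C (-3/2 : ℝ) * X 0 ^ 7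 * X 1 ^ 1 + C (9/16 : ℝ) * X 0 ^ 8 * X 1 ^ 0 := by
  show P (2+2) = _
  rw [P, P3_eq]
  simp only [legf, map_neg, map_add, map_sub, map_mul, map_one, pderiv_mul,
    pderiv_pow, pderiv_C, pderiv_X_self, pderiv_one,
    pderiv_X_of_ne (show (1:Fin 2) ≠ 0 by decide)]
  apply MvPolynomial.funext; intro x
  simp [legf]
  ring

set_option maxHeartbeats 1000000 in
lemma P5_eq : P 5 = C (105/32 : ℝ) * X 0 ^ 0 * X 1 ^ 5 + C (-225/16 : ℝ) * X 0 ^ 1 * X 1 ^ 4 + C (-225/16 : ℝ) * X 0 ^ 1 * X 1 ^ 5 + C (45/2 : ℝ) * X 0 ^ 2 * X 1 ^ 3 + C (1935/32 : ℝ) * X 0 ^ 2 * X 1 ^ 4 + C (45/2 : ℝ) * X 0 ^ 2 * X 1 ^ 5 + C (-15 : ℝ) * X 0 ^ 3 * X 1 ^ 2 + C (-195/2 : ℝ) * X 0 ^ 3 * X 1 ^ 3 + C (-195/2 : ℝ) * X 0 ^ 3 * X 1 ^ 4 + C (-15 : ℝ) * X 0 ^ 3 * X 1 ^ 5 + C (135/2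 : ℝ) * X 0 ^ 4 * X 1 ^ 2 + C (2565/16 : ℝ) * X 0 ^ 4 * X 1 ^ 3 + C (135/2 : ℝ) * X 0 ^ 4 * X 1 ^ 4 + C (-945/8 : ℝ) * X 0 ^ 5 * X 1 ^ 2 + C (-945/8 : ℝ) * X 0 ^ 5 * X 1 ^ 3 + C (1575/16 : ℝ) * X 0 ^ 6 * X 1 ^ 2 + C (-675/32 : ℝ) * X 0 ^ 8 * X 1 ^ 1 + C (75/16 : ℝ) * X 0 ^ 9 * X 1 ^ 0 + C (75/16 : ℝ) * X 0 ^ 9 * X 1 ^ 1 + C (-45/32 : ℝ) * X 0 ^ 10 * X 1 ^ 0 := by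
  show P (3+2) = _
  rw [P, P4_eq]
  simp only [legf, map_neg, map_add, map_sub, map_mul, map_one, pderiv_mul,
    pderiv_pow, pderiv_C, pderiv_X_self, pderiv_one,
    pderiv_X_of_ne (show (1:Fin 2) ≠ 0 by decide)]
  apply MvPolynomial.funext; intro x
  simp [legf]
  ring

lemma term_eq (a : ℝ) (i j : ℕ) :
    (C a * X 0 ^ i * X 1 ^ j : MvPolynomial (Fin 2) ℝ)
      = monomial (Finsupp.single 0 i + Finsupp.single 1 j) a := by
  rw [MvPolynomial.C_apply, MvPolynomial.X_pow_eq_monomial, MvPolynomial.X_pow_eq_monomial,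
    MvPolynomial.monomial_mul, MvPolynomial.monomial_mul]
  simp

lemma coeffterm (a c : ℝ) (i j : ℕ) :
    (Polynomial.C a * Polynomial.X ^ i * (Polynomial.C c * Polynomial.X) ^ j).coeff 5
      = if i + j = 5 then a * c ^ j else 0 := by
  rw [mul_pow, ← Polynomial.C_pow]
  rw [show Polynomial.C a * Polynomial.X ^ i * (Polynomial.C (c ^ j) * Polynomial.X ^ j)
      = Polynomial.C (a * c ^ j) * Polynomial.X ^ (i + j) by
    rw [Polynomial.C_mul, pow_add]; ring]
  rw [Polynomial.coeff_C_mul, Polynomial.coeff_X_pow]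
  rcases eq_or_ne (i + j) 5 with h5 | h5
  · simp [h5]
  · simp [h5, Ne.symm h5]

set_option maxHeartbeats 4000000 in
/-- Newton-polygon data for `P 5` at the origin: every monomial `x^i λ^j` occurring in `P 5`
satisfies `i + j ≥ 5` and `i + 3j ≥ 9` (it lies above the lower hull); the lowest-order part
of `P 5` along `λ = c·x` (the coefficient of `x⁵` in `P 5 (x, c x)`) is
`(15/32)c²(c-2)(7c²-16c+16)`; and the unique nonzero real `c` killing this leading term is
`c = 2`. -/
theorem keyPolynomial_five_newton_polygon :
    (∀ d ∈ (P 5).support, 5 ≤ d 0 + d 1 ∧ 9 ≤ d 0 + 3 * d 1)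
      ∧ (∀ c : ℝ,
          (aeval (![Polynomial.X, Polynomial.C c * Polynomial.X] : Fin 2 → Polynomial ℝ)
              (P 5)).coeff 5
            = 15 / 32 * c ^ 2 * (c - 2) * (7 * c ^ 2 - 16 * c + 16))
      ∧ (∀ c : ℝ, c ≠ 0 →
          (15 / 32 * c ^ 2 * (c - 2) * (7 * c ^ 2 - 16 * c + 16) = 0 ↔ c = 2)) := by
  refine ⟨?_, ?_, ?_⟩
  · intro d hd
    rw [P5_eq] at hd
    simp only [term_eq] at hd
    repeat' rcases Finset.mem_union.mp (MvPolynomial.support_add hd) with hd | hd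
    all_goals
      rw [MvPolynomial.support_monomial, if_neg (by norm_num), Finset.mem_singleton] at hd
    all_goals
      subst hd
      simp only [Finsupp.add_apply, Finsupp.single_apply]
      norm_num
  · intro c
    rw [P5_eq]
    simp only [map_add, map_mul, map_pow, aeval_C, aeval_X, Matrix.cons_val_zero,
      Matrix.cons_val_one, Matrix.head_cons, Polynomial.algebraMap_eq]
    simp only [Polynomial.coeff_add, coeffterm]
    norm_num
    ring
  · intro c hc
    constructor
    · intro h
      have hq : (0:ℝ) < 7 * c ^ 2 - 16 * c + 16 := by nlinarith [sq_nonneg (7 * c - 8)]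
      have h2 : c - 2 = 0 := by
        by_contra h2
        exact mul_ne_zero (mul_ne_zero (mul_ne_zero (by norm_num : (15/32:ℝ) ≠ 0)
          (pow_ne_zero 2 hc)) h2) (ne_of_gt hq) h
      linarith
    · rintro rfl; ring
end
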